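/- arXiv:2111.11637 — 2 statements merged into one kernel-verified Lean document; each statement's English description precedes it below -/
import Mathlib

section
/- For the maximally convex distribution S̄ with support {0, H₁,…,H_{n−1}, 1} and masses {1−α₁, α₁−α₂,…,α_{n−1}−αₙ, αₙ} (α₁ ≥ … ≥ αₙ), the variance satisfies Var(S̄) = Σ_{i=1}^n Σ_{j=1}^n h_i h_j (min(α_i, α_j) − α_i α_j). -/
open MeasureTheory ProbabilityTheory Set Finset

/-!
The level sets of `S̄` give `E g(S̄) = Σₖ (α_k − α_{k+1}) g(H_k)`, and summation by parts turns
this into `Σₖ α_k (g(H_k) − g(H_{k−1}))`. Hence `E S̄ = Σₖ h_k α_k` and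
`E S̄² = Σₖ α_k (H_k² − H_{k−1}²)`. Since `α` is decreasing, `min(α_i, α_k) = α_k` for `i ≤ k`, so
the row and column of index `k` add `α_k (2 h_k H_{k−1} + h_k²) = α_k (H_k² − H_{k−1}²)` to
`Σᵢⱼ h_i h_j min(α_i, α_j)`, which is therefore `E S̄²` as well.
-/

theorem Finset.sum_range_succ_sub_mul_eq {R : Type*} [CommRing R] (a c : ℕ → R) (m : ℕ) :
    ∑ k ∈ range (m + 1), (a k - a (k + 1)) * c k
      = a 0 * c 0 - a (m + 1) * c m + ∑ k ∈ Icc 1 m, a k * (c k - c (k - 1)) := by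
  induction m with
  | zero => simp; ring
  | succ m ih =>
    rw [sum_range_succ, ih, sum_Icc_succ_top (by omega), Nat.add_sub_cancel]
    ring

theorem Finset.sum_Icc_one_sub_sum_Icc_one_pred {M : Type*} [AddCommGroup M] (h : ℕ → M)
    {k : ℕ} (hk : 1 ≤ k) : ∑ i ∈ Icc 1 k, h i - ∑ i ∈ Icc 1 (k - 1), h i = h k := by
  obtain ⟨m, rfl⟩ := Nat.exists_eq_add_of_le' hk
  rw [Nat.add_sub_cancel, sum_Icc_succ_top (Nat.le_add_left 1 m), add_sub_cancel_left]

theorem strictMonoOn_sum_Icc_one {M : Type*} [AddCommMonoid M] [PartialOrder M]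
    [IsOrderedCancelAddMonoid M] {h : ℕ → M} {n : ℕ} (hpos : ∀ i ∈ Finset.Icc 1 n, 0 < h i) :
    StrictMonoOn (fun k => ∑ i ∈ Icc 1 k, h i) (Set.Iic n) :=
  strictMonoOn_Iic_of_lt_succ fun m hm => by
    rw [Order.succ_eq_add_one, sum_Icc_succ_top (Nat.le_add_left 1 m)]
    exact lt_add_of_pos_right _ (hpos _ (Finset.mem_Icc.2 ⟨by omega, hm⟩))

theorem sum_sum_mul_min_of_antitoneOn {R : Type*} [CommRing R] [LinearOrder R]
    (h α : ℕ → R) (n : ℕ) (hα : AntitoneOn α (Set.Icc 1 n)) :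
    ∑ i ∈ Icc 1 n, ∑ j ∈ Icc 1 n, h i * h j * min (α i) (α j)
      = ∑ k ∈ Icc 1 n, α k * ((∑ i ∈ Icc 1 k, h i) ^ 2 - (∑ i ∈ Icc 1 (k - 1), h i) ^ 2) := by
  induction n with
  | zero => simp
  | succ n ih =>
    have hmin : ∀ i ∈ Finset.Icc 1 n, min (α i) (α (n + 1)) = α (n + 1) := fun i hi =>
      have hi := Finset.mem_Icc.1 hi
      min_eq_right (hα ⟨hi.1, by omega⟩ ⟨by omega, le_rfl⟩ (by omega))
    have hrow : ∑ i ∈ Icc 1 n, h i * h (n + 1) * min (α i) (α (n + 1))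
        = α (n + 1) * h (n + 1) * ∑ i ∈ Icc 1 n, h i := by
      rw [mul_sum]; exact sum_congr rfl fun i hi => by rw [hmin i hi]; ring
    have hcol : ∑ j ∈ Icc 1 n, h (n + 1) * h j * min (α (n + 1)) (α j)
        = α (n + 1) * h (n + 1) * ∑ i ∈ Icc 1 n, h i := by
      rw [← hrow]; exact sum_congr rfl fun j _ => by rw [min_comm]; ring
    simp only [sum_Icc_succ_top (Nat.le_add_left 1 n), sum_add_distrib, hrow, hcol,
      ih (hα.mono (Set.Icc_subset_Icc_right n.le_succ)), Nat.add_sub_cancel, min_self]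
    ring

section FiniteRange

variable {Ω E : Type*} [MeasurableSpace Ω] {μ : Measure Ω} [IsFiniteMeasure μ]
  [NormedAddCommGroup E]

theorem memLp_of_forall_mem_finset {X : Ω → E} (hX : AEStronglyMeasurable X μ) {s : Finset E}
    (hs : ∀ ω, X ω ∈ s) (p : ENNReal) : MemLp X p μ :=
  .of_bound hX (∑ x ∈ s, ‖x‖) <|
    ae_of_all _ fun ω => single_le_sum (fun x _ => norm_nonneg x) (hs ω)

theorem integral_comp_eq_sum_of_forall_mem {α : Type*} [MeasurableSpace α]
    [MeasurableSingletonClass α] [NormedSpace ℝ E] [CompleteSpace E] {X : Ω → α}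
    (hX : Measurable X) {s : Finset α} (hs : ∀ ω, X ω ∈ s) (g : α → E) :
    ∫ ω, g (X ω) ∂μ = ∑ x ∈ s, μ.real (X ⁻¹' {x}) • g x := by
  have hsplit : (fun ω => g (X ω))
      = fun ω => ∑ x ∈ s, (X ⁻¹' {x}).indicator (fun _ => g x) ω := by
    funext ω
    rw [sum_eq_single_of_mem (X ω) (hs ω) fun x _ hx =>
      indicator_of_notMem (show ω ∉ X ⁻¹' {x} from Ne.symm hx) _]
    exact (indicator_of_mem rfl _).symm
  have hfib : ∀ x, MeasurableSet (X ⁻¹' {x}) := fun x => hX (measurableSet_singleton x)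
  rw [hsplit, integral_finsetSum _ fun x _ => (integrable_const _).indicator (hfib x)]
  exact sum_congr rfl fun x _ => integral_indicator_const _ (hfib x)

theorem integral_comp_eq_sum_Icc_mul_sub {X : Ω → ℝ} (hX : Measurable X) {x a : ℕ → ℝ} {n : ℕ}
    (hx : InjOn x (Finset.range (n + 1))) (hX_mem : ∀ ω, X ω ∈ (Finset.range (n + 1)).image x)
    (hlaw : ∀ k ≤ n, μ.real (X ⁻¹' {x k}) = a k - a (k + 1)) (ha : a (n + 1) = 0)
    {g : ℝ → ℝ} (hg : g (x 0) = 0) :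
    ∫ ω, g (X ω) ∂μ = ∑ k ∈ Finset.Icc 1 n, a k * (g (x k) - g (x (k - 1))) := by
  rw [integral_comp_eq_sum_of_forall_mem hX hX_mem, sum_image hx,
    sum_congr rfl fun k hk => by rw [hlaw k (Nat.le_of_lt_succ (mem_range.1 hk)), smul_eq_mul],
    sum_range_succ_sub_mul_eq, hg, ha]
  ring

end FiniteRange

theorem variance_maximallyConvex_general
    {Ω : Type*} [MeasureSpace Ω] [IsProbabilityMeasure (volume : Measure Ω)]
    (n : ℕ) (h α : ℕ → ℝ)
    (hpos : ∀ i ∈ Finset.Icc 1 n, 0 < h i)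
    (hαdec : ∀ i ∈ Finset.Icc 1 (n - 1), α (i + 1) ≤ α i)
    (H : ℕ → ℝ) (hH : ∀ k, H k = ∑ i ∈ Finset.Icc 1 k, h i)
    (A : ℕ → ℝ) (hA : ∀ j, A j = if j = 0 then 1 else if j ≤ n then α j else 0)
    (Sbar : Ω → ℝ) (hmeas : Measurable Sbar)
    (hsupp : ∀ ω, ∃ k ≤ n, Sbar ω = H k)
    (hP : ∀ k ≤ n, (volume {ω | Sbar ω = H k}).toReal = A k - A (k + 1)) :
    variance Sbar (volume : Measure Ω)
      = ∑ i ∈ Finset.Icc 1 n, ∑ j ∈ Finset.Icc 1 n,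
          h i * h j * (min (α i) (α j) - α i * α j) := by
  have hmem : ∀ ω, Sbar ω ∈ (Finset.range (n + 1)).image H := fun ω => by
    obtain ⟨k, hk, hω⟩ := hsupp ω
    exact mem_image.2 ⟨k, mem_range.2 (Nat.lt_succ_of_le hk), hω.symm⟩
  have hinj : InjOn H (Finset.range (n + 1)) := by
    rw [funext hH]
    exact (strictMonoOn_sum_Icc_one hpos).injOn.mono fun k hk =>
      Nat.le_of_lt_succ (mem_range.1 hk)
  have hmoment : ∀ g : ℝ → ℝ, g 0 = 0 →
      ∫ ω, g (Sbar ω) = ∑ k ∈ Finset.Icc 1 n, α k * (g (H k) - g (H (k - 1))) := by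
    intro g hg
    rw [integral_comp_eq_sum_Icc_mul_sub hmeas hinj hmem
      (fun k hk => (measureReal_def _ _).trans (hP k hk))
      (by simp [hA]) (by simpa [hH] using hg)]
    refine sum_congr rfl fun k hk => ?_
    obtain ⟨hk1, hkn⟩ := Finset.mem_Icc.1 hk
    rw [hA, if_neg (Nat.one_le_iff_ne_zero.1 hk1), if_pos hkn]
  have hE1 : ∫ ω, Sbar ω = ∑ k ∈ Finset.Icc 1 n, h k * α k :=
    (hmoment id rfl).trans <| sum_congr rfl fun k hk => by
      rw [id, id, hH, hH, sum_Icc_one_sub_sum_Icc_one_pred h (Finset.mem_Icc.1 hk).1, mul_comm]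
  have hE2 : ∫ ω, Sbar ω ^ 2 = ∑ k ∈ Finset.Icc 1 n,
      α k * ((∑ i ∈ Finset.Icc 1 k, h i) ^ 2 - (∑ i ∈ Finset.Icc 1 (k - 1), h i) ^ 2) := by
    simpa only [hH] using hmoment (· ^ 2) (zero_pow two_ne_zero)
  have hanti : AntitoneOn α (Set.Icc 1 n) := antitoneOn_of_succ_le ordConnected_Icc
    fun a _ ha hb =>
      hαdec a (Finset.mem_Icc.2 ⟨ha.1, Nat.le_sub_one_of_lt (Order.succ_le_iff.1 hb.2)⟩)
  rw [variance_eq_sub (memLp_of_forall_mem_finset hmeas.aestronglyMeasurable hmem 2)]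
  simp only [Pi.pow_apply]
  rw [hE1, hE2, ← sum_sum_mul_min_of_antitoneOn h α n hanti, sq, sum_mul_sum, ← sum_sub_distrib]
  exact sum_congr rfl fun i _ => by rw [← sum_sub_distrib]; exact sum_congr rfl fun j _ => by ring

/-- Variance of the maximally convex distribution:
`Var(S̄) = Σ_i Σ_j h_i h_j (min(α_i, α_j) − α_i α_j)`. -/
theorem variance_maximallyConvex
    {Ω : Type*} [MeasureSpace Ω] [IsProbabilityMeasure (volume : Measure Ω)]
    (n : ℕ) (hn : 1 ≤ n) (h α : ℕ → ℝ)
    (hpos : ∀ i ∈ Finset.Icc 1 n, 0 < h i)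
    (hsum : ∑ i ∈ Finset.Icc 1 n, h i = 1)
    (hαmem : ∀ i ∈ Finset.Icc 1 n, α i ∈ Set.Icc (0:ℝ) 1)
    (hαdec : ∀ i ∈ Finset.Icc 1 (n - 1), α (i + 1) ≤ α i)
    (H : ℕ → ℝ) (hH : ∀ k, H k = ∑ i ∈ Finset.Icc 1 k, h i)
    (A : ℕ → ℝ) (hA : ∀ j, A j = if j = 0 then 1 else if j ≤ n then α j else 0)
    (Sbar : Ω → ℝ) (hmeas : Measurable Sbar)
    (hsupp : ∀ ω, ∃ k ≤ n, Sbar ω = H k)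
    (hP : ∀ k ≤ n, (volume {ω | Sbar ω = H k}).toReal = A k - A (k + 1)) :
    variance Sbar (volume : Measure Ω)
      = ∑ i ∈ Finset.Icc 1 n, ∑ j ∈ Finset.Icc 1 n,
          h i * h j * (min (α i) (α j) - α i * α j) :=
  variance_maximallyConvex_general n h α hpos hαdec H hH A hA Sbar hmeas hsupp hP
end

section
/- Let S be a [0,1]-valued random variable with π_S(H_k) ≤ Σ_{i>k} h_i α_i for k = 0,1,…,n−1 (where H₀ = 0, so in particular E[S] ≤ Σ_i h_i α_i). Then there exists β ∈ [0, α₁] such that, setting a_k = min(β, α_k), one has Σ_k h_k a_k = E[S] and π_S(H_k) ≤ Σ_{i>k} h_i a_i for all k = 1,…,n−1; consequently S can be written as S = Σ_k h_k X_k with X_k ∈ [0,1] and E[X_k] = a_k ≤ α_k. -/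
/-!
Write `π_T(c) = E[(T - c)₊]`; it is convex and continuous in `c`. The equal-cost decomposition is
proved by induction on the number of blocks. By convexity, the knot bounds put `π_T` below the
piecewise linear interpolation of the values `∑_{i>k} wᵢ aᵢ` at the knots `H_k`, and by the
intermediate value theorem there is an `x` with `E[min((T - x)₊, w₁)] = w₁ a₁`. Removing this window
from `T` turns `π_T(c)` into `π_T(c + w₁)` above `x` and into `π_T(c) - w₁ a₁` below `x`; as the
interpolation has slope at least `-a₁`, the remainder satisfies the knot bounds of the remaining
blocks.

For the theorem, `β` is chosen by the intermediate value theorem so that `∑ hₖ min(β, αₖ) = E[S]`.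
Let `j` be the last index with `β ≤ α_j`. From `H_j` on, the capped tail sums agree with the
uncapped ones; up to `H_j` they are the affine function `E[S] - β c`, which dominates `π_S` by
convexity.
-/

open MeasureTheory Set Finset

section Sums

variable {M : Type*} [AddCommMonoid M]

lemma sum_Icc_add_one (f : ℕ → M) (p q : ℕ) :
    ∑ i ∈ Finset.Icc p q, f (i + 1) = ∑ i ∈ Finset.Icc (p + 1) (q + 1), f i := by
  rw [← Finset.map_add_right_Icc, Finset.sum_map]
  rfl

lemma sum_Icc_eq_add_sum_Icc {p q : ℕ} (hpq : p ≤ q) (f : ℕ → M) :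
    ∑ i ∈ Finset.Icc p q, f i = f p + ∑ i ∈ Finset.Icc (p + 1) q, f i := by
  rw [Finset.Icc_eq_cons_Ioc hpq, Finset.sum_cons, Finset.Icc_add_one_left_eq_Ioc]

lemma sum_Icc_one_succ (f : ℕ → M) (m : ℕ) :
    ∑ i ∈ Finset.Icc 1 (m + 1), f i = f 1 + ∑ i ∈ Finset.Icc 1 m, f (i + 1) := by
  rw [sum_Icc_eq_add_sum_Icc (by omega), sum_Icc_add_one]

lemma sum_Icc_one_add_sum_Icc {k m : ℕ} (hkm : k ≤ m) (f : ℕ → M) :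
    ∑ i ∈ Finset.Icc 1 k, f i + ∑ i ∈ Finset.Icc (k + 1) m, f i = ∑ i ∈ Finset.Icc 1 m, f i := by
  simpa only [← Finset.Icc_add_one_left_eq_Ioc, zero_add] using
    Finset.sum_Ioc_consecutive f (Nat.zero_le k) hkm

end Sums

lemma ConvexOn.le_affine_of_mem_Icc {s : Set ℝ} {f : ℝ → ℝ} (hf : ConvexOn ℝ s f)
    {p q A B : ℝ} (hps : p ∈ s) (hqs : q ∈ s) (hp : f p ≤ A + B * p) (hq : f q ≤ A + B * q)
    {z : ℝ} (hz : z ∈ Set.Icc p q) : f z ≤ A + B * z := by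
  have haff : ConcaveOn ℝ s fun t => A + B * t :=
    ⟨hf.1, fun x _ y _ a b _ _ hab =>
      le_of_eq (by simp only [smul_eq_mul]; linear_combination A * hab)⟩
  have := (hf.sub haff).le_on_segment hps hqs (by rwa [segment_eq_Icc (hz.1.trans hz.2)])
  simp only [Pi.sub_apply] at this
  linarith [max_le (sub_nonpos.2 hp) (sub_nonpos.2 hq)]

/-- For `0 ≤ d` this is `min (max (t - x) 0) d`, the part of `t` lying in `[x, x + d]`. -/
def window (x d t : ℝ) : ℝ := max (t - x) 0 - max (t - (x + d)) 0

section Window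

variable {x d t : ℝ}

lemma window_mem_Icc (hd : 0 ≤ d) : window x d t ∈ Set.Icc 0 d := by
  unfold window; constructor <;> (simp only [max_def]; split_ifs <;> linarith)

lemma sub_window_mem_Icc (hd : 0 ≤ d) {L : ℝ} (ht : t ∈ Set.Icc 0 L)
    (hx : x ∈ Set.Icc 0 (L - d)) : t - window x d t ∈ Set.Icc 0 (L - d) := by
  obtain ⟨ht0, htL⟩ := ht; obtain ⟨hx0, hxL⟩ := hx
  unfold window; constructor <;> (simp only [max_def]; split_ifs <;> linarith)

lemma posPart_sub_window_of_le (hd : 0 ≤ d) {c : ℝ} (hc : c ≤ x) :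
    max (t - window x d t - c) 0 = max (t - c) 0 - window x d t := by
  unfold window; simp only [max_def]; split_ifs <;> linarith

lemma posPart_sub_window_of_ge (hd : 0 ≤ d) {c : ℝ} (hc : x ≤ c) :
    max (t - window x d t - c) 0 = max (t - (c + d)) 0 := by
  unfold window; simp only [max_def]; split_ifs <;> linarith

end Window

/-- The paper's `π_T`. -/
noncomputable def stopLoss {Ω : Type*} [MeasurableSpace Ω] (μ : Measure Ω) (T : Ω → ℝ) (c : ℝ) :
    ℝ :=
  ∫ ω, max (T ω - c) 0 ∂μ

section StopLoss

variable {Ω : Type*} [MeasurableSpace Ω] {μ : Measure Ω} {T : Ω → ℝ}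

lemma stopLoss_zero_of_nonneg (hT : ∀ ω, 0 ≤ T ω) : stopLoss μ T 0 = ∫ ω, T ω ∂μ := by
  simp only [stopLoss, sub_zero, max_eq_left (hT _)]

lemma stopLoss_eq_zero {c : ℝ} (hT : ∀ ω, T ω ≤ c) : stopLoss μ T c = 0 := by
  simp only [stopLoss, max_eq_right (sub_nonpos.2 (hT _)), integral_zero]

lemma stopLoss_sub_window_of_ge {x d c : ℝ} (hd : 0 ≤ d) (hc : x ≤ c) :
    stopLoss μ (fun ω => T ω - window x d (T ω)) c = stopLoss μ T (c + d) := by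
  simp only [stopLoss, posPart_sub_window_of_ge hd hc]

variable [IsFiniteMeasure μ]

lemma MeasureTheory.Integrable.posPart_sub (hT : Integrable T μ) (c : ℝ) :
    Integrable (fun ω => max (T ω - c) 0) μ :=
  (hT.sub (integrable_const c)).pos_part

lemma MeasureTheory.Integrable.window (hT : Integrable T μ) (x d : ℝ) :
    Integrable (fun ω => window x d (T ω)) μ :=
  (hT.posPart_sub x).sub (hT.posPart_sub (x + d))

lemma integral_window (hT : Integrable T μ) (x d : ℝ) :
    ∫ ω, window x d (T ω) ∂μ = stopLoss μ T x - stopLoss μ T (x + d) :=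
  integral_sub (hT.posPart_sub x) (hT.posPart_sub (x + d))

lemma stopLoss_sub_window_of_le (hT : Integrable T μ) {x d c : ℝ} (hd : 0 ≤ d) (hc : c ≤ x) :
    stopLoss μ (fun ω => T ω - window x d (T ω)) c
      = stopLoss μ T c - (stopLoss μ T x - stopLoss μ T (x + d)) := by
  simp only [stopLoss, posPart_sub_window_of_le hd hc]
  rw [integral_sub (hT.posPart_sub c) (hT.window x d), integral_window hT]
  rfl

lemma convexOn_stopLoss (hT : Integrable T μ) : ConvexOn ℝ univ (stopLoss μ T) := by
  refine ⟨convex_univ, fun x _ y _ a b ha hb hab => ?_⟩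
  simp only [smul_eq_mul, stopLoss]
  rw [← integral_const_mul, ← integral_const_mul,
    ← integral_add ((hT.posPart_sub x).const_mul a) ((hT.posPart_sub y).const_mul b)]
  refine integral_mono (hT.posPart_sub _)
    (((hT.posPart_sub x).const_mul a).add ((hT.posPart_sub y).const_mul b)) fun ω => ?_
  refine max_le ?_ (by positivity)
  calc T ω - (a * x + b * y) = a * (T ω - x) + b * (T ω - y) := by linear_combination (-T ω) * hab
    _ ≤ a * max (T ω - x) 0 + b * max (T ω - y) 0 := by gcongr <;> exact le_max_left _ _

lemma continuous_stopLoss (hT : Integrable T μ) : Continuous (stopLoss μ T) :=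
  continuousOn_univ.1 ((convexOn_stopLoss hT).continuousOn isOpen_univ)

lemma exists_stopLoss_sub_stopLoss_eq (hT : Integrable T μ) {p q d v : ℝ} (hpq : p ≤ q)
    (hp : v ≤ stopLoss μ T p - stopLoss μ T (p + d))
    (hq : stopLoss μ T q - stopLoss μ T (q + d) ≤ v) :
    ∃ x ∈ Set.Icc p q, stopLoss μ T x - stopLoss μ T (x + d) = v :=
  intermediate_value_Icc' hpq
    ((continuous_stopLoss hT).sub ((continuous_stopLoss hT).comp
      (continuous_add_const d))).continuousOn ⟨hq, hp⟩

end StopLoss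

/-- The paper's `H_k`; block `i` is the interval `[H_{i-1}, H_i]`. -/
def knot (w : ℕ → ℝ) (k : ℕ) : ℝ := ∑ i ∈ Finset.Icc 1 k, w i

section Knot

variable {w : ℕ → ℝ} {m : ℕ}

@[simp] lemma knot_zero : knot w 0 = 0 := by simp [knot]

lemma knot_succ (k : ℕ) : knot w (k + 1) = knot w k + w (k + 1) :=
  Finset.sum_Icc_succ_top (by omega) w

lemma knot_one : knot w 1 = w 1 := by simpa using knot_succ (w := w) 0

lemma knot_shift (k : ℕ) : knot (fun i => w (i + 1)) k = knot w (k + 1) - w 1 := by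
  simp only [knot, sum_Icc_one_succ]
  ring

lemma knot_mono (hw : ∀ i ∈ Finset.Icc 1 m, 0 ≤ w i) {j k : ℕ} (hjk : j ≤ k) (hkm : k ≤ m) :
    knot w j ≤ knot w k :=
  Finset.sum_le_sum_of_subset_of_nonneg (Finset.Icc_subset_Icc_right hjk) fun i hi _ =>
    hw i (by simp only [Finset.mem_Icc] at hi ⊢; omega)

lemma knot_nonneg (hw : ∀ i ∈ Finset.Icc 1 m, 0 ≤ w i) {k : ℕ} (hkm : k ≤ m) : 0 ≤ knot w k := by
  simpa using knot_mono hw (Nat.zero_le k) hkm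

lemma knot_le_knot_sub (hw : ∀ i ∈ Finset.Icc 1 m, 0 ≤ w i) {k i : ℕ} (hki : k < i) (him : i ≤ m) :
    knot w k ≤ knot w i - w i := by
  obtain ⟨j, rfl⟩ : ∃ j, i = j + 1 := ⟨i - 1, by omega⟩
  rw [knot_succ, add_sub_cancel_right]
  exact knot_mono hw (by omega) (by omega)

end Knot

/-- The length of the part of block `i` lying to the right of `c`. -/
def blockLength (w : ℕ → ℝ) (i : ℕ) (c : ℝ) : ℝ :=
  max (knot w i - c) 0 - max (knot w i - w i - c) 0

section BlockLength

variable {w : ℕ → ℝ} {i : ℕ} {c : ℝ}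

lemma blockLength_eq_zero (hwi : 0 ≤ w i) (hc : knot w i ≤ c) : blockLength w i c = 0 := by
  unfold blockLength; simp only [max_def]; split_ifs <;> linarith

lemma blockLength_eq_self (hwi : 0 ≤ w i) (hc : c ≤ knot w i - w i) : blockLength w i c = w i := by
  unfold blockLength; simp only [max_def]; split_ifs <;> linarith

lemma blockLength_eq_sub (hc : c ∈ Set.Icc (knot w i - w i) (knot w i)) :
    blockLength w i c = knot w i - c := by
  obtain ⟨hc₁, hc₂⟩ := hc
  unfold blockLength; simp only [max_def]; split_ifs <;> linarith

lemma blockLength_antitone (hwi : 0 ≤ w i) : Antitone (blockLength w i) := by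
  intro c d hcd
  unfold blockLength; simp only [max_def]; split_ifs <;> linarith

lemma sum_blockLength (m : ℕ) (c : ℝ) :
    ∑ i ∈ Finset.Icc 1 m, blockLength w i c = max (knot w m - c) 0 - max (-c) 0 := by
  induction m with
  | zero => simp
  | succ m ih =>
    rw [Finset.sum_Icc_succ_top (by omega), ih, blockLength, knot_succ, add_sub_cancel_right]
    ring

end BlockLength

def envelope (m : ℕ) (w a : ℕ → ℝ) (c : ℝ) : ℝ := ∑ i ∈ Finset.Icc 1 m, a i * blockLength w i c

section Envelope

variable {m : ℕ} {w a : ℕ → ℝ}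

lemma envelope_knot (hw : ∀ i ∈ Finset.Icc 1 m, 0 ≤ w i) {k : ℕ} (hkm : k ≤ m) :
    envelope m w a (knot w k) = ∑ i ∈ Finset.Icc (k + 1) m, w i * a i := by
  have : Finset.Icc (k + 1) m = (Finset.Icc 1 m).filter (k < ·) := by
    ext i; simp only [Finset.mem_Icc, Finset.mem_filter]; omega
  rw [this, Finset.sum_filter, envelope]
  refine Finset.sum_congr rfl fun i hi => ?_
  split_ifs with hki
  · rw [blockLength_eq_self (hw i hi) (knot_le_knot_sub hw hki (Finset.mem_Icc.1 hi).2), mul_comm]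
  · rw [blockLength_eq_zero (hw i hi) (knot_mono hw (not_lt.1 hki) hkm), mul_zero]

lemma envelope_eq_of_mem_Icc (hw : ∀ i ∈ Finset.Icc 1 m, 0 ≤ w i) {k : ℕ} (hkm : k < m) {c : ℝ}
    (hc : c ∈ Set.Icc (knot w k) (knot w (k + 1))) :
    envelope m w a c = a (k + 1) * (knot w (k + 1) - c) + envelope m w a (knot w (k + 1)) := by
  have hk : knot w (k + 1) - w (k + 1) = knot w k := by rw [knot_succ, add_sub_cancel_right]
  rw [← sub_eq_iff_eq_add, envelope, envelope, ← Finset.sum_sub_distrib,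
    Finset.sum_eq_single_of_mem (k + 1) (Finset.mem_Icc.2 ⟨by omega, hkm⟩)]
  · rw [blockLength_eq_sub (by rwa [hk]),
      blockLength_eq_sub (by rw [hk]; exact ⟨hc.1.trans hc.2, le_rfl⟩)]
    ring
  · intro i hi hik
    have hwi := hw i hi
    obtain hik | hik := lt_or_gt_of_ne hik
    · have hi_le : knot w i ≤ knot w k := knot_mono hw (by omega) (by omega)
      rw [blockLength_eq_zero hwi (hi_le.trans hc.1), blockLength_eq_zero hwi
        (hi_le.trans (hc.1.trans hc.2))]
      ring
    · have hle : knot w (k + 1) ≤ knot w i - w i := knot_le_knot_sub hw hik (Finset.mem_Icc.1 hi).2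
      rw [blockLength_eq_self hwi (hc.2.trans hle), blockLength_eq_self hwi hle]
      ring

lemma envelope_sub_envelope_le (hw : ∀ i ∈ Finset.Icc 1 m, 0 ≤ w i)
    (ha : AntitoneOn a (Set.Icc 1 m)) {c d : ℝ} (hc : 0 ≤ c) (hd : 0 ≤ d) (hcd : c + d ≤ knot w m) :
    envelope m w a c - envelope m w a (c + d) ≤ a 1 * d := by
  have hsum : ∑ i ∈ Finset.Icc 1 m, (blockLength w i c - blockLength w i (c + d)) = d := by
    rw [Finset.sum_sub_distrib, sum_blockLength, sum_blockLength]
    simp only [max_def]; split_ifs <;> linarith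
  calc envelope m w a c - envelope m w a (c + d)
      = ∑ i ∈ Finset.Icc 1 m, a i * (blockLength w i c - blockLength w i (c + d)) := by
        simp only [envelope, mul_sub, Finset.sum_sub_distrib]
    _ ≤ ∑ i ∈ Finset.Icc 1 m, a 1 * (blockLength w i c - blockLength w i (c + d)) := by
        refine Finset.sum_le_sum fun i hi => ?_
        obtain ⟨hi₁, him⟩ := Finset.mem_Icc.1 hi
        exact mul_le_mul_of_nonneg_right (ha ⟨le_rfl, hi₁.trans him⟩ ⟨hi₁, him⟩ hi₁)
          (sub_nonneg.2 (blockLength_antitone (hw i hi) (by linarith)))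
    _ = a 1 * d := by rw [← Finset.mul_sum, hsum]

lemma le_envelope_of_le_knot (hw : ∀ i ∈ Finset.Icc 1 m, 0 ≤ w i) {f : ℝ → ℝ}
    (hf : ConvexOn ℝ (Set.Icc 0 (knot w m)) f)
    (hknot : ∀ k ≤ m, f (knot w k) ≤ ∑ i ∈ Finset.Icc (k + 1) m, w i * a i) :
    ∀ c ∈ Set.Icc 0 (knot w m), f c ≤ envelope m w a c := by
  have hmem : ∀ k ≤ m, knot w k ∈ Set.Icc 0 (knot w m) := fun k hk =>
    ⟨knot_nonneg hw hk, knot_mono hw hk le_rfl⟩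
  have hblock : ∀ k < m, ∀ c ∈ Set.Icc (knot w k) (knot w (k + 1)), f c ≤ envelope m w a c := by
    intro k hkm c hc
    have hright := envelope_knot (a := a) hw (k := k + 1) hkm
    have hleft := envelope_eq_of_mem_Icc (a := a) hw hkm ⟨le_rfl, knot_mono hw (by omega) hkm⟩
    rw [envelope_knot hw hkm.le] at hleft
    rw [envelope_eq_of_mem_Icc hw hkm hc]
    have := hf.le_affine_of_mem_Icc (hmem k hkm.le) (hmem (k + 1) hkm)
      (A := a (k + 1) * knot w (k + 1) + envelope m w a (knot w (k + 1))) (B := -a (k + 1))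
      (by linarith [hknot k hkm.le]) (by linarith [hknot (k + 1) hkm]) hc
    linarith
  suffices ∀ k ≤ m, ∀ c ∈ Set.Icc 0 (knot w k), f c ≤ envelope m w a c from this m le_rfl
  intro k
  induction k with
  | zero =>
    intro _ c hc
    obtain rfl : c = knot w 0 := by simpa using le_antisymm hc.2 hc.1
    rw [envelope_knot hw (Nat.zero_le m)]
    exact hknot 0 (Nat.zero_le m)
  | succ k ih =>
    intro hkm c hc
    rcases le_total c (knot w k) with hck | hck
    · exact ih (by omega) c ⟨hc.1, hck⟩
    · exact hblock k hkm c ⟨hck, hc.2⟩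

end Envelope

/-- The paper's `(w, a)`-decomposition `T = ∑ w k * X k`. -/
def IsDecomposition {Ω : Type*} [MeasurableSpace Ω] (μ : Measure Ω) (m : ℕ) (w a : ℕ → ℝ)
    (T : Ω → ℝ) (X : ℕ → Ω → ℝ) : Prop :=
  (∀ k ∈ Finset.Icc 1 m, Measurable (X k) ∧ (∀ ω, X k ω ∈ Set.Icc 0 1) ∧ ∫ ω, X k ω ∂μ = a k) ∧
    ∀ ω, T ω = ∑ k ∈ Finset.Icc 1 m, w k * X k ω

section Decomposition

variable {Ω : Type*} [MeasurableSpace Ω] {μ : Measure Ω} {m : ℕ} {w a : ℕ → ℝ} {T : Ω → ℝ}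

lemma IsDecomposition.cons (hw1 : 0 < w 1) {W : Ω → ℝ} (hWm : Measurable W)
    (hWb : ∀ ω, W ω ∈ Set.Icc 0 (w 1)) (hWint : ∫ ω, W ω ∂μ = w 1 * a 1) {X : ℕ → Ω → ℝ}
    (hX : IsDecomposition μ m (fun i => w (i + 1)) (fun i => a (i + 1)) (fun ω => T ω - W ω) X) :
    IsDecomposition μ (m + 1) w a T fun k => if k = 1 then fun ω => W ω / w 1 else X (k - 1) := by
  obtain ⟨hX, hTX⟩ := hX
  have hshift : ∀ i ∈ Finset.Icc 1 m,
      (if i + 1 = 1 then fun ω => W ω / w 1 else X (i + 1 - 1)) = X i := fun i hi =>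
    if_neg (show i + 1 ≠ 1 by simp only [Finset.mem_Icc] at hi; omega)
  refine ⟨fun k hk => ?_, fun ω => ?_⟩
  · obtain rfl | hk1 := eq_or_ne k 1
    · refine ⟨hWm.div_const _, fun ω => ?_, ?_⟩
      · exact ⟨div_nonneg (hWb ω).1 hw1.le, (div_le_one hw1).2 (hWb ω).2⟩
      · simp only [if_pos, integral_div, hWint]
        field_simp
    · obtain ⟨hk₁, hkm⟩ := Finset.mem_Icc.1 hk
      obtain ⟨j, rfl⟩ : ∃ j, k = j + 1 := ⟨k - 1, by omega⟩
      have hj : j ∈ Finset.Icc 1 m := Finset.mem_Icc.2 ⟨by omega, by omega⟩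
      simpa only [hshift j hj] using hX j hj
  · beta_reduce
    rw [sum_Icc_one_succ, Finset.sum_congr rfl fun i hi => by rw [hshift i hi], ← hTX ω,
      if_pos rfl, mul_div_cancel₀ _ hw1.ne']
    ring

variable [IsFiniteMeasure μ]

lemma exists_window_integral_eq (hw : ∀ i ∈ Finset.Icc 1 (m + 1), 0 ≤ w i)
    (ha : AntitoneOn a (Set.Icc 1 (m + 1))) (hT : Integrable T μ)
    (hTb : ∀ ω, T ω ∈ Set.Icc 0 (knot w (m + 1)))
    (hmean : ∫ ω, T ω ∂μ = ∑ i ∈ Finset.Icc 1 (m + 1), w i * a i)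
    (hdom : ∀ c ∈ Set.Icc 0 (knot w (m + 1)), stopLoss μ T c ≤ envelope (m + 1) w a c) :
    ∃ x ∈ Set.Icc 0 (knot w (m + 1) - w 1),
      stopLoss μ T x - stopLoss μ T (x + w 1) = w 1 * a 1 := by
  have hw1 : 0 ≤ w 1 := hw 1 (by simp)
  have hw1L : w 1 ≤ knot w (m + 1) := knot_one (w := w) ▸ knot_mono hw (by omega) le_rfl
  refine exists_stopLoss_sub_stopLoss_eq hT (sub_nonneg.2 hw1L) ?_ ?_
  · have hH1 := hdom (knot w 1) ⟨knot_nonneg hw (by omega), knot_mono hw (by omega) le_rfl⟩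
    rw [envelope_knot hw (by omega), knot_one] at hH1
    rw [zero_add, stopLoss_zero_of_nonneg (fun ω => (hTb ω).1), hmean,
      sum_Icc_eq_add_sum_Icc (by omega)]
    linarith
  · have hL := envelope_sub_envelope_le hw ha (sub_nonneg.2 hw1L) hw1 (sub_add_cancel _ _).le
    rw [sub_add_cancel, envelope_knot hw le_rfl, Finset.Icc_eq_empty (by omega),
      Finset.sum_empty, sub_zero] at hL
    rw [sub_add_cancel, stopLoss_eq_zero (fun ω => (hTb ω).2), sub_zero]
    linarith [hdom _ ⟨sub_nonneg.2 hw1L, sub_le_self _ hw1⟩]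

lemma stopLoss_sub_window_knot_le (hw : ∀ i ∈ Finset.Icc 1 (m + 1), 0 ≤ w i)
    (ha : AntitoneOn a (Set.Icc 1 (m + 1))) (hT : Integrable T μ)
    (hknot : ∀ k ≤ m + 1, stopLoss μ T (knot w k) ≤ ∑ i ∈ Finset.Icc (k + 1) (m + 1), w i * a i)
    (hdom : ∀ c ∈ Set.Icc 0 (knot w (m + 1)), stopLoss μ T c ≤ envelope (m + 1) w a c) {x : ℝ}
    (hx : stopLoss μ T x - stopLoss μ T (x + w 1) = w 1 * a 1) {k : ℕ} (hkm : k ≤ m) :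
    stopLoss μ (fun ω => T ω - window x (w 1) (T ω)) (knot (fun i => w (i + 1)) k)
      ≤ ∑ i ∈ Finset.Icc (k + 1) m, w (i + 1) * a (i + 1) := by
  have hw1 : 0 ≤ w 1 := hw 1 (by simp)
  have hk : knot w (k + 1) ≤ knot w (m + 1) := knot_mono hw (by omega) le_rfl
  have hc : 0 ≤ knot w (k + 1) - w 1 :=
    sub_nonneg.2 (knot_one (w := w) ▸ knot_mono hw (by omega) (by omega))
  rw [knot_shift, sum_Icc_add_one (fun i => w i * a i)]
  rcases le_total (knot w (k + 1) - w 1) x with hcx | hxc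
  · have hlip := envelope_sub_envelope_le hw ha hc hw1 (by rwa [sub_add_cancel])
    rw [sub_add_cancel, envelope_knot hw (by omega)] at hlip
    rw [stopLoss_sub_window_of_le hT hw1 hcx, hx]
    linarith [hdom _ ⟨hc, by linarith⟩]
  · rw [stopLoss_sub_window_of_ge hw1 hxc, sub_add_cancel]
    exact hknot (k + 1) (by omega)

theorem exists_isDecomposition (hw : ∀ i ∈ Finset.Icc 1 m, 0 < w i)
    (ha : AntitoneOn a (Set.Icc 1 m)) (hT : Measurable T)
    (hTb : ∀ ω, T ω ∈ Set.Icc 0 (knot w m))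
    (hmean : ∫ ω, T ω ∂μ = ∑ i ∈ Finset.Icc 1 m, w i * a i)
    (hknot : ∀ k ≤ m, stopLoss μ T (knot w k) ≤ ∑ i ∈ Finset.Icc (k + 1) m, w i * a i) :
    ∃ X, IsDecomposition μ m w a T X := by
  induction m generalizing w a T with
  | zero => exact ⟨0, by simp, fun ω => by simpa using le_antisymm (hTb ω).2 (hTb ω).1⟩
  | succ m ih =>
    have hw0 : ∀ i ∈ Finset.Icc 1 (m + 1), 0 ≤ w i := fun i hi => (hw i hi).le
    have hw1 : 0 < w 1 := hw 1 (by simp)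
    have hTi : Integrable T μ := Integrable.of_mem_Icc 0 _ hT.aemeasurable (ae_of_all _ hTb)
    have hdom := le_envelope_of_le_knot hw0
      ((convexOn_stopLoss hTi).subset (subset_univ _) (convex_Icc _ _)) hknot
    obtain ⟨x, hx, hxW⟩ := exists_window_integral_eq hw0 ha hTi hTb hmean hdom
    have hWm : Measurable fun ω => window x (w 1) (T ω) := by unfold window; fun_prop
    have hWint : ∫ ω, window x (w 1) (T ω) ∂μ = w 1 * a 1 :=
      (integral_window hTi x (w 1)).trans hxW
    obtain ⟨X, hX⟩ := ih (w := fun i => w (i + 1)) (a := fun i => a (i + 1))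
      (T := fun ω => T ω - window x (w 1) (T ω))
      (fun i hi => hw (i + 1) (by simp only [Finset.mem_Icc] at hi ⊢; omega))
      (fun i hi j hj hij => ha ⟨Nat.le_add_left 1 i, Nat.add_le_add_right hi.2 1⟩
        ⟨Nat.le_add_left 1 j, Nat.add_le_add_right hj.2 1⟩ (Nat.add_le_add_right hij 1))
      (hT.sub hWm) (fun ω => by rw [knot_shift]; exact sub_window_mem_Icc hw1.le (hTb ω) hx)
      (by rw [integral_sub hTi (hTi.window _ _), hmean, hWint, sum_Icc_one_succ]; ring)
      (fun k hk => stopLoss_sub_window_knot_le hw0 ha hTi hknot hdom hxW hk)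
    exact ⟨_, hX.cons hw1 hWm (fun ω => window_mem_Icc hw1.le) hWint⟩

end Decomposition

section MinCap

variable {n : ℕ} {w α : ℕ → ℝ}

lemma exists_sum_mul_min_eq (hn : 1 ≤ n) (hα : AntitoneOn α (Set.Icc 1 n))
    (hα0 : ∀ i ∈ Finset.Icc 1 n, 0 ≤ α i) {s : ℝ} (hs0 : 0 ≤ s)
    (hs : s ≤ ∑ i ∈ Finset.Icc 1 n, w i * α i) :
    ∃ β ∈ Set.Icc 0 (α 1), ∑ i ∈ Finset.Icc 1 n, w i * min β (α i) = s := by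
  have hF : Continuous fun β => ∑ i ∈ Finset.Icc 1 n, w i * min β (α i) := by fun_prop
  have hF0 : ∑ i ∈ Finset.Icc 1 n, w i * min 0 (α i) = 0 :=
    Finset.sum_eq_zero fun i hi => by rw [min_eq_left (hα0 i hi), mul_zero]
  have hFα : ∑ i ∈ Finset.Icc 1 n, w i * min (α 1) (α i) = ∑ i ∈ Finset.Icc 1 n, w i * α i :=
    Finset.sum_congr rfl fun i hi => by
      obtain ⟨hi₁, hin⟩ := Finset.mem_Icc.1 hi
      rw [min_eq_right (hα ⟨le_rfl, hn⟩ ⟨hi₁, hin⟩ hi₁)]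
  exact intermediate_value_Icc (hα0 1 (Finset.mem_Icc.2 ⟨le_rfl, hn⟩)) hF.continuousOn
    ⟨by rwa [hF0], by rwa [hFα]⟩

lemma le_sum_mul_min_of_le_sum_mul (hw : ∀ i ∈ Finset.Icc 1 n, 0 ≤ w i)
    (hα : AntitoneOn α (Set.Icc 1 n)) {β : ℝ} {f : ℝ → ℝ}
    (hf : ConvexOn ℝ (Set.Icc 0 (knot w n)) f)
    (hf0 : f 0 ≤ ∑ i ∈ Finset.Icc 1 n, w i * min β (α i))
    (hknot : ∀ k ≤ n, f (knot w k) ≤ ∑ i ∈ Finset.Icc (k + 1) n, w i * α i) :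
    ∀ k ≤ n, f (knot w k) ≤ ∑ i ∈ Finset.Icc (k + 1) n, w i * min β (α i) := by
  -- the cap `β` is active exactly on the blocks `1, …, j`
  set j := Nat.findGreatest (fun i => β ≤ α i) n with hj
  have hjn : j ≤ n := Nat.findGreatest_le n
  have htail : ∀ k, j ≤ k →
      ∑ i ∈ Finset.Icc (k + 1) n, w i * min β (α i) = ∑ i ∈ Finset.Icc (k + 1) n, w i * α i :=
    fun k hjk => Finset.sum_congr rfl fun i hi => by
      obtain ⟨hki, hin⟩ := Finset.mem_Icc.1 hi
      have hαβ : ¬β ≤ α i := Nat.findGreatest_is_greatest (P := fun i => β ≤ α i) (by omega) hin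
      rw [min_eq_right (not_le.1 hαβ).le]
  have hhead : ∀ k ≤ j, ∑ i ∈ Finset.Icc (k + 1) n, w i * min β (α i)
      = ∑ i ∈ Finset.Icc 1 n, w i * min β (α i) - β * knot w k := fun k hkj => by
    have hcap : ∑ i ∈ Finset.Icc 1 k, w i * min β (α i) = β * knot w k := by
      rw [knot, Finset.mul_sum]
      refine Finset.sum_congr rfl fun i hi => ?_
      obtain ⟨hi₁, hik⟩ := Finset.mem_Icc.1 hi
      have hβj : β ≤ α j := Nat.findGreatest_of_ne_zero hj.symm (by omega)
      rw [min_eq_left (hβj.trans (hα ⟨hi₁, by omega⟩ ⟨by omega, hjn⟩ (by omega))), mul_comm]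
    rw [← sum_Icc_one_add_sum_Icc (hkj.trans hjn), hcap]
    ring
  intro k hkn
  rcases le_total j k with hjk | hkj
  · rw [htail k hjk]
    exact hknot k hkn
  · have hmem : ∀ l ≤ n, knot w l ∈ Set.Icc 0 (knot w n) := fun l hl =>
      ⟨knot_nonneg hw hl, knot_mono hw hl le_rfl⟩
    have hfj := hknot j hjn
    rw [← htail j le_rfl, hhead j le_rfl] at hfj
    rw [hhead k hkj]
    have := hf.le_affine_of_mem_Icc (hmem 0 (Nat.zero_le n)) (hmem j hjn)
      (A := ∑ i ∈ Finset.Icc 1 n, w i * min β (α i)) (B := -β) (by simpa using hf0) (by linarith)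
      ⟨knot_nonneg hw (hkj.trans hjn), knot_mono hw hkj hjn⟩
    linarith

end MinCap

/-- Bounded-cost decomposition: if `S ∈ [0,1]` satisfies
`π_S(H_k) ≤ Σ_{i>k} h_i α_i` for `k = 0,…,n−1`, then there exists `β ∈ [0, α₁]`
such that with `a_k = min β α_k` one has `Σ h_k a_k = E[S]`,
`π_S(H_k) ≤ Σ_{i>k} h_i a_i` for `k = 1,…,n−1`, and `S = Σ h_k X_k` with
`X_k ∈ [0,1]` and `E[X_k] = a_k ≤ α_k`. -/
theorem bounded_cost_decomposition
    {Ω : Type*} [MeasureSpace Ω] [IsProbabilityMeasure (volume : Measure Ω)]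
    (n : ℕ) (hn : 1 ≤ n) (h α : ℕ → ℝ)
    (hpos : ∀ i ∈ Finset.Icc 1 n, 0 < h i)
    (hsum : ∑ i ∈ Finset.Icc 1 n, h i = 1)
    (hαmem : ∀ i ∈ Finset.Icc 1 n, α i ∈ Set.Ioc (0:ℝ) 1)
    (hαdec : ∀ i ∈ Finset.Icc 1 (n - 1), α (i + 1) < α i)
    (H : ℕ → ℝ) (hH : ∀ k, H k = ∑ i ∈ Finset.Icc 1 k, h i)
    (S : Ω → ℝ) (hSmeas : Measurable S) (hSb : ∀ ω, S ω ∈ Set.Icc (0:ℝ) 1)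
    (hSLT : ∀ k < n,
      (∫ ω, max (S ω - H k) 0) ≤ ∑ i ∈ Finset.Icc (k + 1) n, h i * α i) :
    ∃ β ∈ Set.Icc (0:ℝ) (α 1),
      (∑ k ∈ Finset.Icc 1 n, h k * min β (α k)) = ∫ ω, S ω ∧
      (∀ k ∈ Finset.Icc 1 (n - 1),
        (∫ ω, max (S ω - H k) 0) ≤ ∑ i ∈ Finset.Icc (k + 1) n, h i * min β (α i)) ∧
      ∃ X : ℕ → Ω → ℝ,
        (∀ k ∈ Finset.Icc 1 n,
          (∀ ω, X k ω ∈ Set.Icc (0:ℝ) 1) ∧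
          (∫ ω, X k ω) = min β (α k) ∧ min β (α k) ≤ α k) ∧
        ∀ ω, S ω = ∑ k ∈ Finset.Icc 1 n, h k * X k ω := by
  obtain rfl : H = knot h := funext hH
  have hα : AntitoneOn α (Set.Icc 1 n) :=
    antitoneOn_of_succ_le Set.ordConnected_Icc fun i _ hi hi' =>
      (hαdec i (Finset.mem_Icc.2 ⟨hi.1, Nat.le_sub_one_of_lt (Order.succ_le_iff.1 hi'.2)⟩)).le
  have hS0 : ∀ ω, 0 ≤ S ω := fun ω => (hSb ω).1
  have hSn : ∀ ω, S ω ∈ Set.Icc 0 (knot h n) := fun ω => by simpa only [knot, hsum] using hSb ω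
  have hknotα : ∀ k ≤ n, stopLoss volume S (knot h k) ≤ ∑ i ∈ Finset.Icc (k + 1) n, h i * α i := by
    intro k hkn
    obtain hkn | rfl := hkn.lt_or_eq
    · exact hSLT k hkn
    · rw [stopLoss_eq_zero fun ω => (hSn ω).2, Finset.Icc_eq_empty (by omega), Finset.sum_empty]
  obtain ⟨β, hβ, hβS⟩ := exists_sum_mul_min_eq hn hα (fun i hi => (hαmem i hi).1.le)
    (integral_nonneg hS0) (stopLoss_zero_of_nonneg hS0 ▸ hknotα 0 (Nat.zero_le n))
  have hknot := le_sum_mul_min_of_le_sum_mul (fun i hi => (hpos i hi).le) hα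
    ((convexOn_stopLoss (Integrable.of_mem_Icc 0 1 hSmeas.aemeasurable (ae_of_all _ hSb))).subset
      (subset_univ _) (convex_Icc _ _)) (by rw [stopLoss_zero_of_nonneg hS0, hβS]) hknotα
  obtain ⟨X, hX, hSX⟩ := exists_isDecomposition hpos
    (fun i hi j hj hij => min_le_min_left β (hα hi hj hij)) hSmeas hSn hβS.symm hknot
  exact ⟨β, hβ, hβS, fun k hk => hknot k ((Finset.mem_Icc.1 hk).2.trans (Nat.sub_le n 1)), X,
    fun k hk => ⟨(hX k hk).2.1, (hX k hk).2.2, min_le_right _ _⟩, hSX⟩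
end
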